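/- arXiv:1912.10320 — 6 statements merged into one kernel-verified Lean document; each statement's English description precedes it below -/
import Mathlib

section
/- Let a, e, Λ′ ∈ ℝ, r > 0, and σ ∈ {+1, −1}. Assume W := r − Λ′r⁴ − e² ≥ 0 and D := 2e² + r(r−3) − a²r²Λ′ + 2σa√W > 0. Define E_σ := (e² + r(r−2) − r²(r²+a²)Λ′ + σa√W)/(r√D) and L_σ := (σ(r²+a²)√W − 2ar − ar²Λ′(r²+a²) + ae²)/(r√D). Then, with E = E_σ and L = L_σ, the radial potential R satisfies R(r) = 0 and dR/dr(r) = 0; that is, (E_σ, L_σ) are the specific energy and specific angular momentum of an equatorial circular geodesic of radius r in the Kerr–Newman–(anti) de Sitter spacetime. -/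
/-- Equatorial circular geodesics of the Kerr–Newman–(anti) de Sitter
spacetime (units G=c=M=1, Λ' = Λ/3).  With
`E_σ = (e² + r(r−2) − r²(r²+a²)Λ′ + σa√W)/(r√D)` and
`L_σ = (σ(r²+a²)√W − 2ar − ar²Λ′(r²+a²) + ae²)/(r√D)` the radial potential
`R(x) = [(x²+a²)E − aL]² − Δ_r(x)(x² + (L−aE)²)` satisfies `R(r)=0` and `R'(r)=0`. -/
theorem stmt_0 (a e Λ' r σ W D E L : ℝ) (hr : 0 < r) (hσ : σ = 1 ∨ σ = -1)
    (hW : W = r - Λ' * r ^ 4 - e ^ 2) (hW0 : 0 ≤ W)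
    (hD : D = 2 * e ^ 2 + r * (r - 3) - a ^ 2 * r ^ 2 * Λ' + 2 * σ * a * Real.sqrt W)
    (hD0 : 0 < D)
    (hE : E = (e ^ 2 + r * (r - 2) - r ^ 2 * (r ^ 2 + a ^ 2) * Λ' + σ * a * Real.sqrt W)
              / (r * Real.sqrt D))
    (hL : L = (σ * (r ^ 2 + a ^ 2) * Real.sqrt W - 2 * a * r
              - a * r ^ 2 * Λ' * (r ^ 2 + a ^ 2) + a * e ^ 2) / (r * Real.sqrt D)) :
    (fun x : ℝ => ((x ^ 2 + a ^ 2) * E - a * L) ^ 2 -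
        ((1 - Λ' * x ^ 2) * (x ^ 2 + a ^ 2) - 2 * x + e ^ 2) * (x ^ 2 + (L - a * E) ^ 2)) r = 0
    ∧ deriv (fun x : ℝ => ((x ^ 2 + a ^ 2) * E - a * L) ^ 2 -
        ((1 - Λ' * x ^ 2) * (x ^ 2 + a ^ 2) - 2 * x + e ^ 2) * (x ^ 2 + (L - a * E) ^ 2)) r
      = 0 := by
  set s := Real.sqrt W with hsdef
  set d := Real.sqrt D with hddef
  have hs2 : s ^ 2 = r - Λ' * r ^ 4 - e ^ 2 := by
    rw [hsdef, Real.sq_sqrt hW0, hW]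
  have hd2 : d ^ 2 = D := by rw [hddef, Real.sq_sqrt hD0.le]
  have hσ2 : σ ^ 2 = 1 := by rcases hσ with h | h <;> rw [h] <;> norm_num
  have hr0 : r ≠ 0 := ne_of_gt hr
  have hd0 : d ≠ 0 := ne_of_gt (Real.sqrt_pos.mpr hD0)
  have hrd0 : (r * d) ^ 2 ≠ 0 := pow_ne_zero 2 (mul_ne_zero hr0 hd0)
  -- numerator abbreviations
  set NE : ℝ := e ^ 2 + r * (r - 2) - r ^ 2 * (r ^ 2 + a ^ 2) * Λ' + σ * a * s with hNE
  set NL : ℝ := σ * (r ^ 2 + a ^ 2) * s - 2 * a * r - a * r ^ 2 * Λ' * (r ^ 2 + a ^ 2)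
      + a * e ^ 2 with hNL
  have hE' : E * (r * d) = NE := by rw [hE]; field_simp
  have hL' : L * (r * d) = NL := by rw [hL]; field_simp
  have hA : ((r ^ 2 + a ^ 2) * E - a * L) * (r * d) = (r ^ 2 + a ^ 2) * NE - a * NL := by
    rw [← hE', ← hL']; ring
  have hB : (L - a * E) * (r * d) = NL - a * NE := by
    rw [← hE', ← hL']; ring
  have hrd : (r * d) ^ 2 = r ^ 2 * D := by rw [mul_pow, hd2]
  constructor
  · show ((r ^ 2 + a ^ 2) * E - a * L) ^ 2 -
        ((1 - Λ' * r ^ 2) * (r ^ 2 + a ^ 2) - 2 * r + e ^ 2) * (r ^ 2 + (L - a * E) ^ 2) = 0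
    apply mul_left_cancel₀ hrd0
    rw [mul_zero]
    calc (r * d) ^ 2 * (((r ^ 2 + a ^ 2) * E - a * L) ^ 2 -
          ((1 - Λ' * r ^ 2) * (r ^ 2 + a ^ 2) - 2 * r + e ^ 2) * (r ^ 2 + (L - a * E) ^ 2))
        = (((r ^ 2 + a ^ 2) * E - a * L) * (r * d)) ^ 2 -
          ((1 - Λ' * r ^ 2) * (r ^ 2 + a ^ 2) - 2 * r + e ^ 2) *
            (r ^ 2 * (r * d) ^ 2 + ((L - a * E) * (r * d)) ^ 2) := by ring
      _ = ((r ^ 2 + a ^ 2) * NE - a * NL) ^ 2 -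
          ((1 - Λ' * r ^ 2) * (r ^ 2 + a ^ 2) - 2 * r + e ^ 2) *
            (r ^ 2 * (r ^ 2 * D) + (NL - a * NE) ^ 2) := by rw [hA, hB, hrd]
      _ = 0 := by
          rw [hNE, hNL, hD]
          linear_combination
            (2*r^5*σ^2 - r^6*σ^2 + Λ'*r^8*σ^2 - e^2*r^4*σ^2 - a^2*r^4*σ^2
              + a^2*Λ'*r^6*σ^2) * hs2 +
            (2*r^6 - r^7 - Λ'*r^9 + Λ'*r^10 - Λ'^2*r^12 - 3*e^2*r^5 + e^2*r^6 + e^4*r^4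
              - a^2*r^5 + a^2*Λ'*r^7 + a^2*Λ'*r^8 - a^2*Λ'^2*r^10 + a^2*e^2*r^4
              - a^2*e^2*Λ'*r^6) * hσ2
  · have h1 : HasDerivAt (fun x : ℝ => x ^ 2) (2 * r) r := by
      simpa using hasDerivAt_pow 2 r
    have hAd : HasDerivAt (fun x : ℝ => (x ^ 2 + a ^ 2) * E - a * L) (2 * r * E) r :=
      ((h1.add_const (a ^ 2)).mul_const E).sub_const (a * L)
    have hA2 : HasDerivAt (fun x : ℝ => ((x ^ 2 + a ^ 2) * E - a * L) ^ 2)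
        (2 * ((r ^ 2 + a ^ 2) * E - a * L) ^ 1 * (2 * r * E)) r := hAd.pow 2
    have hc : HasDerivAt (fun x : ℝ => 1 - Λ' * x ^ 2) (-(Λ' * (2 * r))) r :=
      (h1.const_mul Λ').const_sub 1
    have hΔ : HasDerivAt (fun x : ℝ => (1 - Λ' * x ^ 2) * (x ^ 2 + a ^ 2) - 2 * x + e ^ 2)
        ((-(Λ' * (2 * r))) * (r ^ 2 + a ^ 2) + (1 - Λ' * r ^ 2) * (2 * r) - 2 * 1) r :=
      ((hc.mul (h1.add_const (a ^ 2))).sub ((hasDerivAt_id r).const_mul 2)).add_const (e ^ 2)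
    have hS : HasDerivAt (fun x : ℝ => x ^ 2 + (L - a * E) ^ 2) (2 * r) r :=
      h1.add_const _
    have hf : HasDerivAt (fun x : ℝ => ((x ^ 2 + a ^ 2) * E - a * L) ^ 2 -
        ((1 - Λ' * x ^ 2) * (x ^ 2 + a ^ 2) - 2 * x + e ^ 2) * (x ^ 2 + (L - a * E) ^ 2))
        (2 * ((r ^ 2 + a ^ 2) * E - a * L) ^ 1 * (2 * r * E) -
          (((-(Λ' * (2 * r))) * (r ^ 2 + a ^ 2) + (1 - Λ' * r ^ 2) * (2 * r) - 2 * 1) *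
            (r ^ 2 + (L - a * E) ^ 2) +
           ((1 - Λ' * r ^ 2) * (r ^ 2 + a ^ 2) - 2 * r + e ^ 2) * (2 * r))) r :=
      hA2.sub (hΔ.mul hS)
    rw [hf.deriv]
    apply mul_left_cancel₀ hrd0
    rw [mul_zero]
    calc (r * d) ^ 2 * (2 * ((r ^ 2 + a ^ 2) * E - a * L) ^ 1 * (2 * r * E) -
          (((-(Λ' * (2 * r))) * (r ^ 2 + a ^ 2) + (1 - Λ' * r ^ 2) * (2 * r) - 2 * 1) *
            (r ^ 2 + (L - a * E) ^ 2) +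
           ((1 - Λ' * r ^ 2) * (r ^ 2 + a ^ 2) - 2 * r + e ^ 2) * (2 * r)))
        = 4 * r * ((((r ^ 2 + a ^ 2) * E - a * L) * (r * d)) * (E * (r * d))) -
          ((-(Λ' * (2 * r))) * (r ^ 2 + a ^ 2) + (1 - Λ' * r ^ 2) * (2 * r) - 2) *
            (r ^ 2 * (r * d) ^ 2 + ((L - a * E) * (r * d)) ^ 2) -
          ((1 - Λ' * r ^ 2) * (r ^ 2 + a ^ 2) - 2 * r + e ^ 2) * (2 * r) * (r * d) ^ 2 := by
          ring
      _ = 4 * r * (((r ^ 2 + a ^ 2) * NE - a * NL) * NE) -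
          ((-(Λ' * (2 * r))) * (r ^ 2 + a ^ 2) + (1 - Λ' * r ^ 2) * (2 * r) - 2) *
            (r ^ 2 * (r ^ 2 * D) + (NL - a * NE) ^ 2) -
          ((1 - Λ' * r ^ 2) * (r ^ 2 + a ^ 2) - 2 * r + e ^ 2) * (2 * r) * (r ^ 2 * D) := by
          rw [hA, hB, hE', hrd]
      _ = 0 := by
          rw [hNE, hNL, hD]
          linear_combination
            (2*r^4*σ^2 - 2*r^5*σ^2 + 4*Λ'*r^7*σ^2 + 2*a^2*Λ'*r^5*σ^2) * hs2 +
            (2*r^5 - 2*r^6 + 2*Λ'*r^8 + 2*Λ'*r^9 - 4*Λ'^2*r^11 - 2*e^2*r^4 + 2*e^2*r^5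
              - 4*e^2*Λ'*r^7 + 2*a^2*Λ'*r^6 - 2*a^2*Λ'^2*r^9 - 2*a^2*e^2*Λ'*r^5) * hσ2
end

section
/- Let a, e, Λ′ ∈ ℝ, r > 0, and σ ∈ {+1, −1}. Assume W := r − Λ′r⁴ − e² ≥ 0 and D := 2e² + r(r−3) − a²r²Λ′ + 2σa√W > 0, and let E = E_σ := (e² + r(r−2) − r²(r²+a²)Λ′ + σa√W)/(r√D) and L = L_σ := (σ(r²+a²)√W − 2ar − ar²Λ′(r²+a²) + ae²)/(r√D) be the constants of an equatorial circular orbit of radius r. Then the second derivative of the radial potential satisfies d²R/dr²(r) ≥ 0 if and only if −8σa(r − Λ′r⁴ − e²)^{3/2} + r²(6 − r + r³(−15 + 4r)Λ′) + 4e⁴ + 3e²r(−3 + 4r³Λ′) + a²(−4e² + r(3 + r²Λ′(1 − 4r³Λ′))) ≥ 0. (This inequality characterizes the radii of stable equatorial circular orbits in the Kerr–Newman–de Sitter spacetime.) -/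
private lemma hasDerivAt_poly6 (c0 c1 c2 c3 c4 c5 c6 x : ℝ) :
    HasDerivAt (fun x : ℝ => c0 + c1*x + c2*x^2 + c3*x^3 + c4*x^4 + c5*x^5 + c6*x^6)
      (c1 + 2*c2*x + 3*c3*x^2 + 4*c4*x^3 + 5*c5*x^4 + 6*c6*x^5) x := by
  have h : HasDerivAt (fun x : ℝ => c0 + c1*x + c2*x^2 + c3*x^3 + c4*x^4 + c5*x^5 + c6*x^6)
      (0 + c1*1 + c2*(↑(2:ℕ)*x^(2-1)) + c3*(↑(3:ℕ)*x^(3-1)) + c4*(↑(4:ℕ)*x^(4-1))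
        + c5*(↑(5:ℕ)*x^(5-1)) + c6*(↑(6:ℕ)*x^(6-1))) x :=
    ((((((hasDerivAt_const x c0).add ((hasDerivAt_id x).const_mul c1)).add
      ((hasDerivAt_pow 2 x).const_mul c2)).add ((hasDerivAt_pow 3 x).const_mul c3)).add
      ((hasDerivAt_pow 4 x).const_mul c4)).add ((hasDerivAt_pow 5 x).const_mul c5)).add
      ((hasDerivAt_pow 6 x).const_mul c6)
  convert h using 1
  push_cast
  ring

private lemma deriv_poly6 (c0 c1 c2 c3 c4 c5 c6 : ℝ) :
    deriv (fun x : ℝ => c0 + c1*x + c2*x^2 + c3*x^3 + c4*x^4 + c5*x^5 + c6*x^6)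
      = fun x => c1 + 2*c2*x + 3*c3*x^2 + 4*c4*x^3 + 5*c5*x^4 + 6*c6*x^5 := by
  funext x
  exact (hasDerivAt_poly6 c0 c1 c2 c3 c4 c5 c6 x).deriv

private lemma nn_right {c x : ℝ} (h : 0 ≤ c * x) (hc : 0 < c) : 0 ≤ x :=
  le_of_not_gt fun hx => absurd h (not_le.mpr (mul_neg_of_pos_of_neg hc hx))

private lemma nn_left {c x : ℝ} (h : 0 ≤ x * c) (hc : 0 < c) : 0 ≤ x :=
  le_of_not_gt fun hx => absurd h (not_le.mpr (mul_neg_of_neg_of_pos hx hc))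

set_option maxHeartbeats 2000000 in
/-- Stability of equatorial circular orbits in Kerr–Newman–de Sitter
spacetime (units G=c=M=1, Λ' = Λ/3).  For the circular-orbit constants of motion
`E_σ, L_σ`, the second derivative of the radial potential is nonnegative iff
`−8σa W^{3/2} + r²(6−r+r³(−15+4r)Λ′) + 4e⁴ + 3e²r(−3+4r³Λ′)
 + a²(−4e² + r(3+r²Λ′(1−4r³Λ′))) ≥ 0`. -/
theorem stmt_1 (a e Λ' r σ W D E L : ℝ) (hr : 0 < r) (hσ : σ = 1 ∨ σ = -1)
    (hW : W = r - Λ' * r ^ 4 - e ^ 2) (hW0 : 0 ≤ W)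
    (hD : D = 2 * e ^ 2 + r * (r - 3) - a ^ 2 * r ^ 2 * Λ' + 2 * σ * a * Real.sqrt W)
    (hD0 : 0 < D)
    (hE : E = (e ^ 2 + r * (r - 2) - r ^ 2 * (r ^ 2 + a ^ 2) * Λ' + σ * a * Real.sqrt W)
              / (r * Real.sqrt D))
    (hL : L = (σ * (r ^ 2 + a ^ 2) * Real.sqrt W - 2 * a * r
              - a * r ^ 2 * Λ' * (r ^ 2 + a ^ 2) + a * e ^ 2) / (r * Real.sqrt D)) :
    0 ≤ deriv (deriv (fun x : ℝ => ((x ^ 2 + a ^ 2) * E - a * L) ^ 2 -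
          ((1 - Λ' * x ^ 2) * (x ^ 2 + a ^ 2) - 2 * x + e ^ 2) * (x ^ 2 + (L - a * E) ^ 2))) r
    ↔ 0 ≤ -8 * σ * a * W ^ ((3 : ℝ) / 2)
        + r ^ 2 * (6 - r + r ^ 3 * (-15 + 4 * r) * Λ')
        + 4 * e ^ 4 + 3 * e ^ 2 * r * (-3 + 4 * r ^ 3 * Λ')
        + a ^ 2 * (-4 * e ^ 2 + r * (3 + r ^ 2 * Λ' * (1 - 4 * r ^ 3 * Λ'))) := by
  set s := Real.sqrt W with hs
  set d := Real.sqrt D with hdd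
  have hs2 : s ^ 2 = W := Real.sq_sqrt hW0
  have hd2 : d ^ 2 = D := Real.sq_sqrt hD0.le
  have hd0 : d ≠ 0 := by
    have := Real.sqrt_pos.mpr hD0
    exact ne_of_gt this
  have hr0 : r ≠ 0 := ne_of_gt hr
  -- step 1: compute the second derivative
  set c0 : ℝ := (a^2*E - a*L)^2 - (a^2+e^2)*(L - a*E)^2 with hc0
  set c1 : ℝ := 2*(L - a*E)^2 with hc1
  set c2 : ℝ := 2*E*(a^2*E - a*L) - (a^2+e^2) - (1 - Λ'*a^2)*(L - a*E)^2 with hc2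
  set c4 : ℝ := E^2 - (1 - Λ'*a^2) + Λ'*(L - a*E)^2 with hc4
  have hfun : (fun x : ℝ => ((x ^ 2 + a ^ 2) * E - a * L) ^ 2 -
          ((1 - Λ' * x ^ 2) * (x ^ 2 + a ^ 2) - 2 * x + e ^ 2) * (x ^ 2 + (L - a * E) ^ 2))
      = fun x : ℝ => c0 + c1*x + c2*x^2 + 2*x^3 + c4*x^4 + 0*x^5 + Λ'*x^6 := by
    funext x
    rw [hc0, hc1, hc2, hc4]
    ring
  have hder1 : deriv (fun x : ℝ => ((x ^ 2 + a ^ 2) * E - a * L) ^ 2 -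
          ((1 - Λ' * x ^ 2) * (x ^ 2 + a ^ 2) - 2 * x + e ^ 2) * (x ^ 2 + (L - a * E) ^ 2))
      = fun x : ℝ => c1 + (2*c2)*x + (3*2)*x^2 + (4*c4)*x^3 + (5*0)*x^4 + (6*Λ')*x^5
          + 0*x^6 := by
    rw [hfun, deriv_poly6]
    funext x
    ring
  have hder2 : deriv (deriv (fun x : ℝ => ((x ^ 2 + a ^ 2) * E - a * L) ^ 2 -
          ((1 - Λ' * x ^ 2) * (x ^ 2 + a ^ 2) - 2 * x + e ^ 2) * (x ^ 2 + (L - a * E) ^ 2))) r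
      = 2*c2 + 12*r + (12*c4)*r^2 + (30*Λ')*r^4 := by
    rw [hder1, deriv_poly6]
    ring
  rw [hder2]
  -- step 2: the W^{3/2} term
  have hW32 : W ^ ((3:ℝ)/2) = s ^ 3 := by
    rw [show (3:ℝ)/2 = (1/2)*(3:ℕ) by norm_num, Real.rpow_mul hW0, Real.rpow_natCast,
      ← Real.rpow_natCast (W ^ ((1:ℝ)/2)) 3, ← Real.rpow_natCast (s) 3, hs,
      Real.sqrt_eq_rpow]
  rw [hW32]
  -- step 3: eliminate e^2
  have he2 : e ^ 2 = r - Λ' * r ^ 4 - s ^ 2 := by rw [hs2, hW]; ring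
  rw [he2] at hD
  -- step 4: clear the square roots from E and L
  set NE : ℝ := (r - Λ' * r ^ 4 - s ^ 2) + r*(r-2) - r^2*(r^2+a^2)*Λ' + σ*a*s with hNE
  set NL : ℝ := σ*(r^2+a^2)*s - 2*a*r - a*r^2*Λ'*(r^2+a^2) + a*(r - Λ' * r ^ 4 - s ^ 2)
    with hNL
  have hE' : E * (r * d) = NE := by
    rw [hE, he2, hNE]
    field_simp
  have hL' : L * (r * d) = NL := by
    rw [hL, he2, hNL]
    field_simp
  have hX : E^2 * (r^2 * D) = NE^2 := by
    calc E^2 * (r^2 * D) = (E * (r*d))^2 := by rw [← hd2]; ring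
    _ = NE^2 := by rw [hE']
  have hY : (E*L) * (r^2 * D) = NE * NL := by
    calc (E*L) * (r^2 * D) = (E * (r*d)) * (L * (r*d)) := by rw [← hd2]; ring
    _ = NE * NL := by rw [hE', hL']
  have hZ : L^2 * (r^2 * D) = NL^2 := by
    calc L^2 * (r^2 * D) = (L * (r*d))^2 := by rw [← hd2]; ring
    _ = NL^2 := by rw [hL']
  -- step 5: key identity
  have key : (2*c2 + 12*r + (12*c4)*r^2 + (30*Λ')*r^4) * (r^2 * D)
      = 2 * r^2 * (-8 * σ * a * s ^ 3
        + r ^ 2 * (6 - r + r ^ 3 * (-15 + 4 * r) * Λ')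
        + 4 * e ^ 4 + 3 * e ^ 2 * r * (-3 + 4 * r ^ 3 * Λ')
        + a ^ 2 * (-4 * e ^ 2 + r * (3 + r ^ 2 * Λ' * (1 - 4 * r ^ 3 * Λ')))) := by
    rw [hc2, hc4, show e^4 = (e^2)^2 by ring, he2]
    rcases hσ with h1 | h1 <;> subst h1 <;>
      linear_combination (2*a^2 + 2*Λ'*a^4 + 12*r^2 + 12*Λ'*a^2*r^2) * hX
        + (-4*Λ'*a^3 - 24*Λ'*a*r^2) * hY
        + (-2 + 2*Λ'*a^2 + 12*Λ'*r^2) * hZ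
        + ((-2*a^2 - 2*(r - Λ'*r^4 - s^2) + 12*r - 12*r^2 + 12*Λ'*a^2*r^2 + 30*Λ'*r^4)
            * r^2) * hD
  -- step 6: conclude
  have hr2D : 0 < r^2 * D := by positivity
  have h3 : (0:ℝ) < 2 * r^2 := by positivity
  constructor
  · intro h
    have h4 : 0 ≤ 2 * r^2 * (-8 * σ * a * s ^ 3
        + r ^ 2 * (6 - r + r ^ 3 * (-15 + 4 * r) * Λ')
        + 4 * e ^ 4 + 3 * e ^ 2 * r * (-3 + 4 * r ^ 3 * Λ')
        + a ^ 2 * (-4 * e ^ 2 + r * (3 + r ^ 2 * Λ' * (1 - 4 * r ^ 3 * Λ')))) :=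
      key ▸ mul_nonneg h hr2D.le
    exact nn_right h4 h3
  · intro h
    have h4 : 0 ≤ (2*c2 + 12*r + (12*c4)*r^2 + (30*Λ')*r^4) * (r^2 * D) :=
      key ▸ mul_nonneg h3.le h
    exact nn_left h4 hr2D
end

section
/- Let a, e, Q ∈ ℝ, r > 0, and σ ∈ {+1, −1}. Set Υ := a²Q² + r²(−2e²Q + 3Qr − (e²+Q)r² + r³) and assume Υ ≥ 0 and Γ_σ := 2e²r² + r³(r−3) − 2a(aQ − σ√Υ) > 0. Define E_σ := (e²r² + r³(r−2) − a(aQ − σ√Υ))/(r²√Γ_σ) and L_σ := −((r²+a²)(aQ − σ√Υ) + 2ar³ − ae²r²)/(r²√Γ_σ). Then, with E = E_σ and L = L_σ, the radial potential R satisfies R(r) = 0 and dR/dr(r) = 0; i.e., (E_σ, L_σ) are the constants of motion of a timelike spherical orbit of radius r and Carter constant Q in the Kerr–Newman spacetime. -/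
/-- Timelike spherical orbits in Kerr–Newman spacetime (units G=c=M=1).
With `E_σ, L_σ` defined from the radius `r`, Carter constant `Q`, spin `a` and charge `e`,
the radial potential `R(x) = [(x²+a²)E − aL]² − Δ^{KN}(x)(x² + Q + (L−aE)²)` satisfies
`R(r)=0` and `R'(r)=0`. -/
theorem stmt_2 (a e Q r σ Υ Γ E L : ℝ) (hr : 0 < r) (hσ : σ = 1 ∨ σ = -1)
    (hΥ : Υ = a ^ 2 * Q ^ 2 + r ^ 2 * (-2 * e ^ 2 * Q + 3 * Q * r - (e ^ 2 + Q) * r ^ 2 + r ^ 3))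
    (hΥ0 : 0 ≤ Υ)
    (hΓ : Γ = 2 * e ^ 2 * r ^ 2 + r ^ 3 * (r - 3) - 2 * a * (a * Q - σ * Real.sqrt Υ))
    (hΓ0 : 0 < Γ)
    (hE : E = (e ^ 2 * r ^ 2 + r ^ 3 * (r - 2) - a * (a * Q - σ * Real.sqrt Υ))
              / (r ^ 2 * Real.sqrt Γ))
    (hL : L = -((r ^ 2 + a ^ 2) * (a * Q - σ * Real.sqrt Υ) + 2 * a * r ^ 3 - a * e ^ 2 * r ^ 2)
              / (r ^ 2 * Real.sqrt Γ)) :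
    (fun x : ℝ => ((x ^ 2 + a ^ 2) * E - a * L) ^ 2 -
        (x ^ 2 + a ^ 2 + e ^ 2 - 2 * x) * (x ^ 2 + Q + (L - a * E) ^ 2)) r = 0
    ∧ deriv (fun x : ℝ => ((x ^ 2 + a ^ 2) * E - a * L) ^ 2 -
        (x ^ 2 + a ^ 2 + e ^ 2 - 2 * x) * (x ^ 2 + Q + (L - a * E) ^ 2)) r = 0 := by
  -- notation
  set s : ℝ := Real.sqrt Υ with hs
  set u : ℝ := Real.sqrt Γ with hu
  have hs2 : s ^ 2 = Υ := Real.sq_sqrt hΥ0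
  have hu2 : u ^ 2 = Γ := Real.sq_sqrt hΓ0.le
  have hu0 : 0 < u := Real.sqrt_pos.2 hΓ0
  have hune : u ≠ 0 := hu0.ne'
  have hrne : r ≠ 0 := hr.ne'
  have hσ2 : σ ^ 2 = 1 := by rcases hσ with h | h <;> rw [h] <;> norm_num
  obtain ⟨W, hW⟩ : ∃ W : ℝ, W = a * Q - σ * s := ⟨_, rfl⟩
  have hΓW : Γ = 2 * e ^ 2 * r ^ 2 + r ^ 3 * (r - 3) - 2 * a * W := by rw [hW]; exact hΓ
  have keyW : 2 * a * Q * W - W ^ 2 = a ^ 2 * Q ^ 2 - Υ := by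
    rw [hW]
    linear_combination (-σ ^ 2) * hs2 + (-Υ) * hσ2
  -- simplified combinations of E and L
  have h1 : (r ^ 2 + a ^ 2) * E - a * L = r ^ 2 * (r ^ 2 + a ^ 2 + e ^ 2 - 2 * r) / u := by
    rw [hE, hL]
    field_simp
    ring
  have h2 : L - a * E = -(W + a * r ^ 2) / u := by
    rw [hE, hL, hW]
    field_simp
    ring
  have hEW : E = (e ^ 2 * r ^ 2 + r ^ 3 * (r - 2) - a * W) / (r ^ 2 * u) := by
    rw [hE, hW]
  -- the two bracket identities
  have hbr1 : r ^ 4 * (r ^ 2 + a ^ 2 + e ^ 2 - 2 * r) - (r ^ 2 + Q) * Γ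
      - (W + a * r ^ 2) ^ 2 = 0 := by
    linear_combination (-(r ^ 2 + Q)) * hΓW + keyW - hΥ
  have hbr2 : 4 * r * (e ^ 2 * r ^ 2 + r ^ 3 * (r - 2) - a * W) * (r ^ 2 + a ^ 2 + e ^ 2 - 2 * r)
      - (2 * r - 2) * ((r ^ 2 + Q) * Γ + (W + a * r ^ 2) ^ 2)
      - 2 * r * (r ^ 2 + a ^ 2 + e ^ 2 - 2 * r) * Γ = 0 := by
    linear_combination (-(2 * r - 2) * (r ^ 2 + Q) - 2 * r * (r ^ 2 + a ^ 2 + e ^ 2 - 2 * r)) * hΓW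
      + (2 * r - 2) * keyW - (2 * r - 2) * hΥ
  constructor
  · show ((r ^ 2 + a ^ 2) * E - a * L) ^ 2 -
      (r ^ 2 + a ^ 2 + e ^ 2 - 2 * r) * (r ^ 2 + Q + (L - a * E) ^ 2) = 0
    have key : ((r ^ 2 + a ^ 2) * E - a * L) ^ 2 -
        (r ^ 2 + a ^ 2 + e ^ 2 - 2 * r) * (r ^ 2 + Q + (L - a * E) ^ 2) =
        (r ^ 2 + a ^ 2 + e ^ 2 - 2 * r) *
          (r ^ 4 * (r ^ 2 + a ^ 2 + e ^ 2 - 2 * r) - (r ^ 2 + Q) * Γ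
            - (W + a * r ^ 2) ^ 2) / Γ := by
      rw [h1, h2, ← hu2]
      field_simp
      ring
    rw [key, hbr1]
    simp
  · -- compute the derivative
    have hd : HasDerivAt (fun x : ℝ => ((x ^ 2 + a ^ 2) * E - a * L) ^ 2 -
        (x ^ 2 + a ^ 2 + e ^ 2 - 2 * x) * (x ^ 2 + Q + (L - a * E) ^ 2))
        (2 * ((r ^ 2 + a ^ 2) * E - a * L) ^ 1 * (2 * r ^ 1 * E) -
          ((2 * r ^ 1 - 2 * 1) * (r ^ 2 + Q + (L - a * E) ^ 2) +
            (r ^ 2 + a ^ 2 + e ^ 2 - 2 * r) * (2 * r ^ 1))) r := by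
      have hx2 : HasDerivAt (fun x : ℝ => x ^ 2) (2 * r ^ 1) r := hasDerivAt_pow 2 r
      have hg1 : HasDerivAt (fun x : ℝ => (x ^ 2 + a ^ 2) * E - a * L) (2 * r ^ 1 * E) r :=
        ((hx2.add_const (a ^ 2)).mul_const E).sub_const (a * L)
      have hg2 : HasDerivAt (fun x : ℝ => x ^ 2 + a ^ 2 + e ^ 2 - 2 * x)
          (2 * r ^ 1 - 2 * 1) r :=
        ((hx2.add_const (a ^ 2)).add_const (e ^ 2)).sub ((hasDerivAt_id r).const_mul 2)
      have hg3 : HasDerivAt (fun x : ℝ => x ^ 2 + Q + (L - a * E) ^ 2) (2 * r ^ 1) r :=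
        (hx2.add_const Q).add_const ((L - a * E) ^ 2)
      have := (hg1.pow 2).sub (hg2.mul hg3)
      exact this
    rw [hd.deriv]
    have key : 2 * ((r ^ 2 + a ^ 2) * E - a * L) ^ 1 * (2 * r ^ 1 * E) -
        ((2 * r ^ 1 - 2 * 1) * (r ^ 2 + Q + (L - a * E) ^ 2) +
          (r ^ 2 + a ^ 2 + e ^ 2 - 2 * r) * (2 * r ^ 1)) =
        (4 * r * (e ^ 2 * r ^ 2 + r ^ 3 * (r - 2) - a * W) * (r ^ 2 + a ^ 2 + e ^ 2 - 2 * r)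
          - (2 * r - 2) * ((r ^ 2 + Q) * Γ + (W + a * r ^ 2) ^ 2)
          - 2 * r * (r ^ 2 + a ^ 2 + e ^ 2 - 2 * r) * Γ) / Γ := by
      rw [h1, h2, hEW, ← hu2]
      field_simp
      ring
    rw [key, hbr2]
    simp
end

section
/- Let a, e, Λ′, Q ∈ ℝ, r > 0, and σ ∈ {+1, −1}. Set Υ_Λ := a²Q(Q + r⁴Λ′) + r²(−2e²Q − (e²+Q)r² + 3Qr + r³ − r⁶Λ′) and assume Υ_Λ ≥ 0 and Γ_σ := 2e²r² + r³(r−3) − a²r⁴Λ′ − 2a(aQ − σ√Υ_Λ) > 0. Define E_σ := (r²e² + r³(r−2) − Λ′r⁴(r²+a²) − a(aQ − σ√Υ_Λ))/(r²√Γ_σ) and L_σ := −((r²+a²)(aQ − σ√Υ_Λ) + 2ar³ + ar⁴Λ′(r²+a²) − ae²r²)/(r²√Γ_σ). Then, with E = E_σ and L = L_σ, the radial potential R satisfies R(r) = 0 and dR/dr(r) = 0; i.e., (E_σ, L_σ) are the constants of motion of a timelike spherical orbit of radius r and Carter constant Q in the Kerr–Newman–(anti) de Sitter spacetime. -/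
/-! At the radius `r`, write `g = √Γ` and `s = σ√Υ`, so that `s² = Υ`. The formulas for `E` and `L`
are equivalent to `g((r²+a²)E − aL) = r²Δ` and `g(L − aE) = s − a(Q + r²)`, and `s² = Υ` turns the
second one into `g²(r² + Q + (L − aE)²) = r⁴Δ`. Hence `R(r) = (r⁴Δ² − r⁴Δ²)/g² = 0`, and
`R'(r) = rΔ(4r²gE − r³Δ' − 2g²)/g²`, whose last factor is identically zero. -/

namespace KerrNewmanDeSitter

def horizon (a e Λ' x : ℝ) : ℝ := (1 - Λ' * x ^ 2) * (x ^ 2 + a ^ 2) - 2 * x + e ^ 2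

def horizonDeriv (a Λ' x : ℝ) : ℝ := 2 * x * (1 - Λ' * x ^ 2) - 2 * Λ' * x * (x ^ 2 + a ^ 2) - 2

def radialPotential (a e Λ' Q E L x : ℝ) : ℝ :=
  ((x ^ 2 + a ^ 2) * E - a * L) ^ 2 - horizon a e Λ' x * (x ^ 2 + Q + (L - a * E) ^ 2)

def IsSphericalOrbit (a e Λ' Q E L r : ℝ) : Prop :=
  radialPotential a e Λ' Q E L r = 0 ∧ deriv (radialPotential a e Λ' Q E L) r = 0

/-- `Υ_Λ` of the statement. -/
def upsilon (a e Λ' Q r : ℝ) : ℝ :=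
  a ^ 2 * Q * (Q + r ^ 4 * Λ') +
    r ^ 2 * (-2 * e ^ 2 * Q - (e ^ 2 + Q) * r ^ 2 + 3 * Q * r + r ^ 3 - r ^ 6 * Λ')

/-- `Γ_σ` of the statement, with `s = σ√Υ_Λ`. -/
def gamma (a e Λ' Q r s : ℝ) : ℝ :=
  2 * e ^ 2 * r ^ 2 + r ^ 3 * (r - 3) - a ^ 2 * r ^ 4 * Λ' - 2 * a * (a * Q - s)

def energyNum (a e Λ' Q r s : ℝ) : ℝ :=
  r ^ 2 * e ^ 2 + r ^ 3 * (r - 2) - Λ' * r ^ 4 * (r ^ 2 + a ^ 2) - a * (a * Q - s)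

def angMomNum (a e Λ' Q r s : ℝ) : ℝ :=
  -((r ^ 2 + a ^ 2) * (a * Q - s) + 2 * a * r ^ 3 + a * r ^ 4 * Λ' * (r ^ 2 + a ^ 2)
    - a * e ^ 2 * r ^ 2)

variable {a e Λ' Q E L : ℝ}

theorem hasDerivAt_horizon (x : ℝ) :
    HasDerivAt (horizon a e Λ') (horizonDeriv a Λ' x) x := by
  have hsq : HasDerivAt (fun x : ℝ => x ^ 2) (2 * x) x := by simpa using hasDerivAt_pow 2 x
  exact ((((hsq.const_mul Λ').const_sub 1).mul (hsq.add_const (a ^ 2))).sub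
    ((hasDerivAt_id x).const_mul 2)).add_const (e ^ 2) |>.congr_deriv (by
      simp only [horizonDeriv]; ring)

theorem hasDerivAt_radialPotential (x : ℝ) :
    HasDerivAt (radialPotential a e Λ' Q E L)
      (4 * x * E * ((x ^ 2 + a ^ 2) * E - a * L)
        - horizonDeriv a Λ' x * (x ^ 2 + Q + (L - a * E) ^ 2) - 2 * x * horizon a e Λ' x) x := by
  have hsq : HasDerivAt (fun x : ℝ => x ^ 2) (2 * x) x := by simpa using hasDerivAt_pow 2 x
  have hP := (((hsq.add_const (a ^ 2)).mul_const E).sub_const (a * L)).pow 2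
  have hK := (hsq.add_const Q).add_const ((L - a * E) ^ 2)
  exact (hP.sub ((hasDerivAt_horizon (a := a) (e := e) (Λ' := Λ') x).mul hK)).congr_deriv
    (by ring)

theorem isSphericalOrbit_of_scaled {r g : ℝ} (hg : g ≠ 0)
    (hP : g * ((r ^ 2 + a ^ 2) * E - a * L) = r ^ 2 * horizon a e Λ' r)
    (hK : g ^ 2 * (r ^ 2 + Q + (L - a * E) ^ 2) = r ^ 4 * horizon a e Λ' r)
    (hE : 4 * r ^ 2 * g * E = r ^ 3 * horizonDeriv a Λ' r + 2 * g ^ 2) :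
    IsSphericalOrbit a e Λ' Q E L r := by
  refine ⟨?_, ?_⟩
  · apply mul_left_cancel₀ (pow_ne_zero 2 hg)
    unfold radialPotential
    linear_combination (g * ((r ^ 2 + a ^ 2) * E - a * L) + r ^ 2 * horizon a e Λ' r) * hP
      - horizon a e Λ' r * hK
  · rw [(hasDerivAt_radialPotential r).deriv]
    apply mul_left_cancel₀ (pow_ne_zero 2 hg)
    linear_combination 4 * r * E * g * hP - horizonDeriv a Λ' r * hK
      + r * horizon a e Λ' r * hE

theorem gamma_mul_add_sq {r s : ℝ} (hs : s ^ 2 = upsilon a e Λ' Q r) :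
    gamma a e Λ' Q r s * (r ^ 2 + Q) + (s - a * (Q + r ^ 2)) ^ 2
      = r ^ 4 * horizon a e Λ' r := by
  unfold gamma horizon upsilon at *
  linear_combination hs

theorem four_mul_energyNum (r s : ℝ) :
    4 * energyNum a e Λ' Q r s = r ^ 3 * horizonDeriv a Λ' r + 2 * gamma a e Λ' Q r s := by
  unfold energyNum horizonDeriv gamma
  ring

theorem isSphericalOrbit {r s g : ℝ} (hr : r ≠ 0) (hs : s ^ 2 = upsilon a e Λ' Q r)
    (hg : g ^ 2 = gamma a e Λ' Q r s) (hg0 : g ≠ 0)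
    (hE : E = energyNum a e Λ' Q r s / (r ^ 2 * g))
    (hL : L = angMomNum a e Λ' Q r s / (r ^ 2 * g)) :
    IsSphericalOrbit a e Λ' Q E L r := by
  have hB : g * (L - a * E) = s - a * (Q + r ^ 2) := by
    rw [hE, hL]; unfold energyNum angMomNum; field_simp; ring
  refine isSphericalOrbit_of_scaled hg0 ?_ ?_ ?_
  · rw [hE, hL]; unfold energyNum angMomNum horizon; field_simp; ring
  · rw [← gamma_mul_add_sq hs, ← hB, ← hg]; ring
  · rw [hE, hg, ← four_mul_energyNum]; field_simp

end KerrNewmanDeSitter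

open KerrNewmanDeSitter in
/-- Timelike spherical orbits in Kerr–Newman–(anti) de Sitter spacetime
(units G=c=M=1, Λ' = Λ/3).  With `E_σ, L_σ` defined from the radius `r`, Carter
constant `Q`, spin `a`, charge `e` and `Λ'`, the radial potential
`R(x) = [(x²+a²)E − aL]² − Δ_r(x)(x² + Q + (L−aE)²)` satisfies `R(r)=0` and `R'(r)=0`. -/
theorem stmt_3 (a e Λ' Q r σ Υ Γ E L : ℝ) (hr : 0 < r) (hσ : σ = 1 ∨ σ = -1)
    (hΥ : Υ = a ^ 2 * Q * (Q + r ^ 4 * Λ') +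
            r ^ 2 * (-2 * e ^ 2 * Q - (e ^ 2 + Q) * r ^ 2 + 3 * Q * r + r ^ 3 - r ^ 6 * Λ'))
    (hΥ0 : 0 ≤ Υ)
    (hΓ : Γ = 2 * e ^ 2 * r ^ 2 + r ^ 3 * (r - 3) - a ^ 2 * r ^ 4 * Λ'
            - 2 * a * (a * Q - σ * Real.sqrt Υ))
    (hΓ0 : 0 < Γ)
    (hE : E = (r ^ 2 * e ^ 2 + r ^ 3 * (r - 2) - Λ' * r ^ 4 * (r ^ 2 + a ^ 2)
              - a * (a * Q - σ * Real.sqrt Υ)) / (r ^ 2 * Real.sqrt Γ))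
    (hL : L = -((r ^ 2 + a ^ 2) * (a * Q - σ * Real.sqrt Υ) + 2 * a * r ^ 3
              + a * r ^ 4 * Λ' * (r ^ 2 + a ^ 2) - a * e ^ 2 * r ^ 2) / (r ^ 2 * Real.sqrt Γ)) :
    (fun x : ℝ => ((x ^ 2 + a ^ 2) * E - a * L) ^ 2 -
        ((1 - Λ' * x ^ 2) * (x ^ 2 + a ^ 2) - 2 * x + e ^ 2) * (x ^ 2 + Q + (L - a * E) ^ 2)) r
      = 0
    ∧ deriv (fun x : ℝ => ((x ^ 2 + a ^ 2) * E - a * L) ^ 2 -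
        ((1 - Λ' * x ^ 2) * (x ^ 2 + a ^ 2) - 2 * x + e ^ 2) * (x ^ 2 + Q + (L - a * E) ^ 2)) r
      = 0 := by
  have hs : (σ * Real.sqrt Υ) ^ 2 = upsilon a e Λ' Q r := by
    have hσ2 : σ ^ 2 = 1 := by rcases hσ with rfl | rfl <;> norm_num
    rw [mul_pow, hσ2, one_mul, Real.sq_sqrt hΥ0, hΥ, upsilon]
  exact isSphericalOrbit hr.ne' hs ((Real.sq_sqrt hΓ0.le).trans hΓ)
    (Real.sqrt_pos.mpr hΓ0).ne' hE hL
end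

section
/- Let M, a, e, Q ∈ ℝ, r ≠ 0, σ ∈ {+1, −1}. Set Υ := a²Q² + r²(−2e²Q + 3QrM − (e²+Q)r² + r³M), assume Υ ≥ 0 and Γ_σ := 2e²r² + r³(r−3M) − 2a(aQ − σ√Υ) > 0, and define E_σ := (e²r² + r³(r−2M) − a(aQ − σ√Υ))/(r²√Γ_σ) and L_σ := −((r²+a²)(aQ − σ√Υ) + 2aMr³ − ae²r²)/(r²√Γ_σ). Then a²(1 − E_σ²) + Q + L_σ² = Ψ_σ/(r²Γ_σ), where Ψ_σ := r³(r−M)(Mr³ + a²Q) − a²Υ + (Mr³ + a²Q − 2σa√Υ)² + e²r²(−r⁴ + r²a² + 2σa√Υ). -/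
/-- For the constants of motion `E_σ, L_σ` of a timelike spherical
Kerr–Newman orbit, `a²(1−E²) + Q + L² = Ψ_σ/(r²Γ_σ)`. -/
theorem stmt_7 (M a e Q r σ Υ Γ E L Ψ : ℝ) (hr : r ≠ 0) (hσ : σ = 1 ∨ σ = -1)
    (hΥ : Υ = a ^ 2 * Q ^ 2 +
            r ^ 2 * (-2 * e ^ 2 * Q + 3 * Q * r * M - (e ^ 2 + Q) * r ^ 2 + r ^ 3 * M))
    (hΥ0 : 0 ≤ Υ)
    (hΓ : Γ = 2 * e ^ 2 * r ^ 2 + r ^ 3 * (r - 3 * M) - 2 * a * (a * Q - σ * Real.sqrt Υ))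
    (hΓ0 : 0 < Γ)
    (hE : E = (e ^ 2 * r ^ 2 + r ^ 3 * (r - 2 * M) - a * (a * Q - σ * Real.sqrt Υ))
              / (r ^ 2 * Real.sqrt Γ))
    (hL : L = -((r ^ 2 + a ^ 2) * (a * Q - σ * Real.sqrt Υ) + 2 * a * M * r ^ 3
              - a * e ^ 2 * r ^ 2) / (r ^ 2 * Real.sqrt Γ))
    (hΨ : Ψ = r ^ 3 * (r - M) * (M * r ^ 3 + a ^ 2 * Q) - a ^ 2 * Υ
            + (M * r ^ 3 + a ^ 2 * Q - 2 * σ * a * Real.sqrt Υ) ^ 2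
            + e ^ 2 * r ^ 2 * (-r ^ 4 + r ^ 2 * a ^ 2 + 2 * σ * a * Real.sqrt Υ)) :
    a ^ 2 * (1 - E ^ 2) + Q + L ^ 2 = Ψ / (r ^ 2 * Γ) := by
  have hσ2 : σ ^ 2 = 1 := by rcases hσ with h | h <;> simp [h]
  set s := Real.sqrt Υ with hs
  have hsU : s ^ 2 = a ^ 2 * Q ^ 2 +
      r ^ 2 * (-2 * e ^ 2 * Q + 3 * Q * r * M - (e ^ 2 + Q) * r ^ 2 + r ^ 3 * M) :=
    (Real.sq_sqrt hΥ0).trans hΥ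
  have hΥs : Υ = s ^ 2 := (Real.sq_sqrt hΥ0).symm
  set nE := e ^ 2 * r ^ 2 + r ^ 3 * (r - 2 * M) - a * (a * Q - σ * s) with hnE
  set nL := (r ^ 2 + a ^ 2) * (a * Q - σ * s) + 2 * a * M * r ^ 3 - a * e ^ 2 * r ^ 2 with hnL
  have hE2 : E ^ 2 = nE ^ 2 / ((r ^ 2) ^ 2 * Γ) := by
    rw [hE, div_pow, mul_pow, Real.sq_sqrt hΓ0.le]
  have hL2 : L ^ 2 = nL ^ 2 / ((r ^ 2) ^ 2 * Γ) := by
    rw [hL, neg_div, neg_sq, div_pow, mul_pow, Real.sq_sqrt hΓ0.le]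
  have key : a ^ 2 * ((r ^ 2) ^ 2 * Γ - nE ^ 2) + Q * ((r ^ 2) ^ 2 * Γ) + nL ^ 2
      = Ψ * r ^ 2 := by
    rw [hΨ, hΓ, hΥs, hnE, hnL]
    linear_combination (r ^ 4 * σ ^ 2 - 2 * a ^ 2 * r ^ 2 * σ ^ 2 + a ^ 2 * r ^ 2) * hsU +
      (-Q * r ^ 8 - e ^ 2 * r ^ 8 - 2 * e ^ 2 * Q * r ^ 6 + 2 * a ^ 2 * Q * r ^ 6
        + a ^ 2 * Q ^ 2 * r ^ 4 + 2 * a ^ 2 * e ^ 2 * r ^ 6 + 4 * a ^ 2 * e ^ 2 * Q * r ^ 4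
        - 2 * a ^ 4 * Q ^ 2 * r ^ 2 + M * r ^ 9 + 3 * M * Q * r ^ 7 - 2 * M * a ^ 2 * r ^ 7
        - 6 * M * a ^ 2 * Q * r ^ 5) * hσ2
  have hD : ((r ^ 2) ^ 2 * Γ) ≠ 0 := by positivity
  have step : a ^ 2 * (1 - E ^ 2) + Q + L ^ 2
      = (a ^ 2 * ((r ^ 2) ^ 2 * Γ - nE ^ 2) + Q * ((r ^ 2) ^ 2 * Γ) + nL ^ 2)
        / ((r ^ 2) ^ 2 * Γ) := by
    rw [hE2, hL2]; field_simp
  rw [step, key, div_eq_div_iff hD (by positivity : r ^ 2 * Γ ≠ 0)]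
  ring
end

section
/- Let z₋, z₊ ∈ ℝ with 0 < z₋ < 1 and z₋ < z₊. Then ∫₀^{z₋} dz / ((1−z)·√z·√((z₊−z)(z₋−z))) = π · z₊^{−1/2} · F₁(1/2, 1/2, 1; 1; z₋/z₊, z₋). -/
/-- The Pochhammer symbol `(q)_k = q(q+1)⋯(q+k−1)`. -/
noncomputable def poch (q : ℝ) (k : ℕ) : ℝ := ∏ i ∈ Finset.range k, (q + (i : ℝ))

/-- Appell's first hypergeometric series
`F₁(α,β,β′;γ;x,y) = Σ_{m,n} (α)_{m+n}(β)_m(β′)_n/((γ)_{m+n} m! n!) x^m y^n`. -/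
noncomputable def appellF1 (α β β' γ x y : ℝ) : ℝ :=
  ∑' p : ℕ × ℕ,
    poch α (p.1 + p.2) * poch β p.1 * poch β' p.2 /
        (poch γ (p.1 + p.2) * (p.1.factorial : ℝ) * (p.2.factorial : ℝ)) *
      x ^ p.1 * y ^ p.2


/-!
The substitution `z = z₋ t` turns the integral into `z₊^(-1/2)` times
`∫₀¹ dt / (√t √(1-t) √(1 - x t) (1 - y t))` with `x = z₋/z₊`, `y = z₋`. Expanding
`(1 - x t)^(-1/2) = Σ (1/2)_m/m! (x t)^m` and `(1 - y t)⁻¹ = Σ (y t)^n` and integrating termwise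
against the arcsine weight, whose moments are Beta integrals
`∫₀¹ t^(k-1/2) (1-t)^(-1/2) dt = Γ(k+1/2) Γ(1/2) / k! = π (1/2)_k / k!`, gives exactly the
coefficients `(1/2)_{m+n} (1/2)_m / ((m+n)! m!)` of `F₁(1/2, 1/2, 1; 1; x, y)`. The interchange is
justified by absolute convergence, all coefficients being at most `1`.
-/

open Set MeasureTheory

lemma poch_succ (q : ℝ) (k : ℕ) : poch q (k + 1) = poch q k * (q + k) :=
  Finset.prod_range_succ _ k

lemma poch_eq_ascPochhammer_eval (q : ℝ) (k : ℕ) : poch q k = (ascPochhammer ℝ k).eval q := by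
  induction k with
  | zero => simp [poch]
  | succ k ih => simp [poch_succ, ascPochhammer_succ_right, ih]

lemma poch_one (k : ℕ) : poch 1 k = k.factorial := by
  simp [poch_eq_ascPochhammer_eval]

lemma poch_nonneg {q : ℝ} (hq : 0 ≤ q) (k : ℕ) : 0 ≤ poch q k :=
  Finset.prod_nonneg fun i _ => by positivity

lemma poch_le_poch {q r : ℝ} (hq : 0 ≤ q) (hqr : q ≤ r) (k : ℕ) : poch q k ≤ poch r k :=
  Finset.prod_le_prod (fun i _ => by positivity) fun i _ => by linarith

/-- `(1/2)_k / k! = C(2k,k) / 4^k`: the Taylor coefficients of `(1 - u)^(-1/2)`, and, up to the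
factor `π`, the moments of the arcsine weight `1 / √(t (1 - t))` on `(0, 1)`. -/
noncomputable def binomHalf (k : ℕ) : ℝ := poch (1 / 2) k / k.factorial

lemma binomHalf_nonneg (k : ℕ) : 0 ≤ binomHalf k :=
  div_nonneg (poch_nonneg (by norm_num) k) (Nat.cast_nonneg _)

lemma binomHalf_le_one (k : ℕ) : binomHalf k ≤ 1 := by
  rw [binomHalf, div_le_one (by positivity), ← poch_one]
  exact poch_le_poch (by norm_num) (by norm_num) k

lemma binomHalf_eq_ringChoose (k : ℕ) : binomHalf k = Ring.choose ((1 / 2 : ℝ) + k - 1) k := by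
  rw [← Ring.multichoose_eq, binomHalf, div_eq_iff (by positivity), mul_comm,
    ← nsmul_eq_mul, Ring.factorial_nsmul_multichoose_eq_ascPochhammer,
    Polynomial.ascPochhammer_smeval_eq_eval, poch_eq_ascPochhammer_eval]

lemma norm_binomHalf_mul_pow_le (k : ℕ) (u : ℝ) : ‖binomHalf k * u ^ k‖ ≤ |u| ^ k := by
  rw [norm_mul, norm_pow, Real.norm_eq_abs, Real.norm_eq_abs, abs_of_nonneg (binomHalf_nonneg k)]
  exact mul_le_of_le_one_left (by positivity) (binomHalf_le_one k)

lemma hasSum_binomHalf_mul_pow {u : ℝ} (hu : |u| < 1) :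
    HasSum (fun k => binomHalf k * u ^ k) (Real.sqrt (1 - u))⁻¹ := by
  have h := (Real.one_div_one_sub_rpow_hasFPowerSeriesOnBall_zero (1 / 2)).hasSum
    (y := u) (by simpa [enorm_eq_nnnorm, ← NNReal.coe_lt_coe] using hu)
  simpa [FormalMultilinearSeries.ofScalars_apply_eq, binomHalf_eq_ringChoose, Real.sqrt_eq_rpow,
    mul_comm] using h

lemma ofReal_rpow_mul_one_sub_rpow {t : ℝ} (ht : t ∈ Icc (0 : ℝ) 1) (a b : ℝ) :
    ((t ^ (a - 1) * (1 - t) ^ (b - 1) : ℝ) : ℂ)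
      = (t : ℂ) ^ ((a : ℂ) - 1) * (1 - (t : ℂ)) ^ ((b : ℂ) - 1) := by
  push_cast [Complex.ofReal_cpow ht.1, Complex.ofReal_cpow (sub_nonneg.2 ht.2)]
  rfl

lemma intervalIntegrable_rpow_mul_one_sub_rpow {a b : ℝ} (ha : 0 < a) (hb : 0 < b) :
    IntervalIntegrable (fun t : ℝ => t ^ (a - 1) * (1 - t) ^ (b - 1)) volume 0 1 := by
  have h := (Complex.betaIntegral_convergent (u := a) (v := b) (by simpa) (by simpa)).norm
  refine h.congr_uIoo fun t ht => ?_
  rw [uIoo_of_le zero_le_one] at ht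
  simp only
  rw [← ofReal_rpow_mul_one_sub_rpow (Ioo_subset_Icc_self ht), Complex.norm_real,
    Real.norm_of_nonneg
    (mul_nonneg (Real.rpow_nonneg ht.1.le _) (Real.rpow_nonneg (sub_pos.2 ht.2).le _))]

lemma integral_rpow_mul_one_sub_rpow {a b : ℝ} (ha : 0 < a) (hb : 0 < b) :
    ∫ t in (0 : ℝ)..1, t ^ (a - 1) * (1 - t) ^ (b - 1)
      = Real.Gamma a * Real.Gamma b / Real.Gamma (a + b) := by
  have h := Complex.betaIntegral_eq_Gamma_mul_div a b (by simpa) (by simpa)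
  rw [Complex.betaIntegral, ← intervalIntegral.integral_congr (fun t ht =>
      ofReal_rpow_mul_one_sub_rpow (by rwa [uIcc_of_le zero_le_one] at ht) a b),
    intervalIntegral.integral_ofReal] at h
  simp only [← Complex.ofReal_add, Complex.Gamma_ofReal] at h
  exact_mod_cast h

lemma Gamma_nat_add_half (k : ℕ) :
    Real.Gamma (k + 1 / 2) = poch (1 / 2) k * Real.sqrt Real.pi := by
  induction k with
  | zero => simpa [poch] using Real.Gamma_one_half_eq
  | succ k ih =>
    rw [Nat.cast_succ, add_right_comm, Real.Gamma_add_one (by positivity), ih, poch_succ]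
    ring

lemma pow_div_sqrt_mul_sqrt_one_sub_eq {t : ℝ} (ht : t ∈ Ioo (0 : ℝ) 1) (k : ℕ) :
    t ^ k / (Real.sqrt t * Real.sqrt (1 - t))
      = t ^ ((k + 1 / 2 : ℝ) - 1) * (1 - t) ^ ((1 / 2 : ℝ) - 1) := by
  have h1t : 0 < 1 - t := sub_pos.2 ht.2
  rw [show (k + 1 / 2 : ℝ) - 1 = k + -(1 / 2) by ring, show (1 / 2 : ℝ) - 1 = -(1 / 2) by norm_num,
    Real.rpow_add ht.1, Real.rpow_natCast, Real.rpow_neg ht.1.le, Real.rpow_neg h1t.le,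
    ← Real.sqrt_eq_rpow, ← Real.sqrt_eq_rpow, div_eq_mul_inv, mul_inv, mul_assoc]

lemma integrableOn_pow_div_sqrt_mul_sqrt_one_sub (k : ℕ) :
    IntegrableOn (fun t => t ^ k / (Real.sqrt t * Real.sqrt (1 - t))) (Ioo 0 1) := by
  have h := intervalIntegrable_rpow_mul_one_sub_rpow (a := k + 1 / 2) (b := 1 / 2)
    (by positivity) (by norm_num)
  rw [intervalIntegrable_iff_integrableOn_Ioo_of_le zero_le_one] at h
  exact h.congr_fun (fun t ht => (pow_div_sqrt_mul_sqrt_one_sub_eq ht k).symm) measurableSet_Ioo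

lemma integral_pow_div_sqrt_mul_sqrt_one_sub (k : ℕ) :
    ∫ t in Ioo 0 1, t ^ k / (Real.sqrt t * Real.sqrt (1 - t)) = Real.pi * binomHalf k := by
  have h := integral_rpow_mul_one_sub_rpow (a := k + 1 / 2) (b := 1 / 2) (by positivity)
    (by norm_num)
  rw [intervalIntegral.integral_of_le zero_le_one, integral_Ioc_eq_integral_Ioo] at h
  rw [setIntegral_congr_fun measurableSet_Ioo (fun t ht => pow_div_sqrt_mul_sqrt_one_sub_eq ht k),
    h, Gamma_nat_add_half, Real.Gamma_one_half_eq, show (k + 1 / 2 + 1 / 2 : ℝ) = k + 1 by ring,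
    Real.Gamma_nat_eq_factorial, binomHalf]
  field_simp
  rw [Real.sq_sqrt Real.pi_pos.le]

lemma summable_abs_pow_mul_abs_pow {x y : ℝ} (hx : |x| < 1) (hy : |y| < 1) :
    Summable fun p : ℕ × ℕ => |x| ^ p.1 * |y| ^ p.2 :=
  (summable_geometric_of_lt_one (abs_nonneg x) hx).mul_of_nonneg
    (summable_geometric_of_lt_one (abs_nonneg y) hy) (fun _ => by positivity)
    (fun _ => by positivity)

lemma hasSum_binomHalf_mul_pow_mul_pow {u v : ℝ} (hu : |u| < 1) (hv : |v| < 1) :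
    HasSum (fun p : ℕ × ℕ => binomHalf p.1 * u ^ p.1 * v ^ p.2)
      ((Real.sqrt (1 - u))⁻¹ * (1 - v)⁻¹) := by
  have hsum : Summable fun p : ℕ × ℕ => binomHalf p.1 * u ^ p.1 * v ^ p.2 :=
    .of_norm_bounded (summable_abs_pow_mul_abs_pow hu hv) fun p => by
      rw [norm_mul, norm_pow, Real.norm_eq_abs]
      exact mul_le_mul_of_nonneg_right (norm_binomHalf_mul_pow_le p.1 u) (by positivity)
  exact (hasSum_binomHalf_mul_pow hu).mul (hasSum_geometric_of_abs_lt_one hv) hsum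

noncomputable def integrandTerm (x y : ℝ) (p : ℕ × ℕ) (t : ℝ) : ℝ :=
  binomHalf p.1 * x ^ p.1 * y ^ p.2 * (t ^ (p.1 + p.2) / (Real.sqrt t * Real.sqrt (1 - t)))

section Expansion

variable {x y : ℝ}

lemma hasSum_integrandTerm {t : ℝ} (ht : t ∈ Ioo (0 : ℝ) 1) (hx : |x| < 1) (hy : |y| < 1) :
    HasSum (fun p => integrandTerm x y p t)
      (1 / (Real.sqrt t * Real.sqrt (1 - t) * Real.sqrt (1 - x * t) * (1 - y * t))) := by
  have habs : |t| < 1 := by rw [abs_of_pos ht.1]; exact ht.2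
  have hmul {z : ℝ} (hz : |z| < 1) : |z * t| < 1 := by
    rw [abs_mul]; nlinarith [abs_nonneg z, abs_nonneg t]
  have h := (hasSum_binomHalf_mul_pow_mul_pow (hmul hx) (hmul hy)).mul_right
    (1 / (Real.sqrt t * Real.sqrt (1 - t)))
  have hterm : (fun p => integrandTerm x y p t) = fun p : ℕ × ℕ =>
      binomHalf p.1 * (x * t) ^ p.1 * (y * t) ^ p.2 * (1 / (Real.sqrt t * Real.sqrt (1 - t))) := by
    funext p
    simp only [integrandTerm, mul_pow, pow_add]
    ring
  rw [hterm, show 1 / (Real.sqrt t * Real.sqrt (1 - t) * Real.sqrt (1 - x * t) * (1 - y * t))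
      = (Real.sqrt (1 - x * t))⁻¹ * (1 - y * t)⁻¹ * (1 / (Real.sqrt t * Real.sqrt (1 - t))) by
        simp only [one_div, mul_inv]; ring]
  exact h

lemma integrableOn_integrandTerm (p : ℕ × ℕ) : IntegrableOn (integrandTerm x y p) (Ioo 0 1) :=
  (integrableOn_pow_div_sqrt_mul_sqrt_one_sub _).const_mul _

lemma integral_integrandTerm (p : ℕ × ℕ) :
    ∫ t in Ioo 0 1, integrandTerm x y p t
      = Real.pi * (binomHalf (p.1 + p.2) * binomHalf p.1 * x ^ p.1 * y ^ p.2) := by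
  simp only [integrandTerm]
  rw [integral_const_mul, integral_pow_div_sqrt_mul_sqrt_one_sub]
  ring

lemma integral_norm_integrandTerm (p : ℕ × ℕ) :
    ∫ t in Ioo 0 1, ‖integrandTerm x y p t‖
      = Real.pi * (binomHalf (p.1 + p.2) * binomHalf p.1 * |x| ^ p.1 * |y| ^ p.2) := by
  rw [← integral_integrandTerm]
  refine setIntegral_congr_fun measurableSet_Ioo fun t ht => ?_
  simp only [integrandTerm, norm_mul, norm_pow, norm_div, Real.norm_eq_abs, abs_of_pos ht.1,
    abs_of_nonneg (binomHalf_nonneg _), abs_of_nonneg (Real.sqrt_nonneg _)]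

lemma summable_integral_norm_integrandTerm (hx : |x| < 1) (hy : |y| < 1) :
    Summable fun p => ∫ t in Ioo 0 1, ‖integrandTerm x y p t‖ := by
  simp_rw [integral_norm_integrandTerm]
  refine ((summable_abs_pow_mul_abs_pow hx hy).mul_left Real.pi).of_nonneg_of_le
    (fun p => by have := binomHalf_nonneg p.1; have := binomHalf_nonneg (p.1 + p.2); positivity)
    fun p => ?_
  gcongr
  exact mul_le_of_le_one_left (by positivity)
    (mul_le_one₀ (binomHalf_le_one _) (binomHalf_nonneg _) (binomHalf_le_one _))

lemma integral_one_div_sqrt_mul_sqrt_mul_sqrt_mul_eq_tsum (hx : |x| < 1) (hy : |y| < 1) :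
    ∫ t in Ioo 0 1, 1 / (Real.sqrt t * Real.sqrt (1 - t) * Real.sqrt (1 - x * t) * (1 - y * t))
      = Real.pi * ∑' p : ℕ × ℕ, binomHalf (p.1 + p.2) * binomHalf p.1 * x ^ p.1 * y ^ p.2 := by
  rw [← tsum_mul_left, ← tsum_congr integral_integrandTerm,
    integral_tsum_of_summable_integral_norm integrableOn_integrandTerm
      (summable_integral_norm_integrandTerm hx hy)]
  exact setIntegral_congr_fun measurableSet_Ioo fun t ht =>
    (hasSum_integrandTerm ht hx hy).tsum_eq.symm

end Expansion

lemma appellF1_half_half_one_one (x y : ℝ) :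
    appellF1 (1 / 2) (1 / 2) 1 1 x y
      = ∑' p : ℕ × ℕ, binomHalf (p.1 + p.2) * binomHalf p.1 * x ^ p.1 * y ^ p.2 := by
  refine tsum_congr fun p => ?_
  simp only [binomHalf, poch_one]
  field_simp

lemma integrand_comp_mul_left_eq {zm zp t : ℝ} (h0 : 0 < zm) (h2 : zm < zp)
    (ht : t ∈ Ioo (0 : ℝ) 1) :
    zm * (1 / ((1 - zm * t) * Real.sqrt (zm * t) * Real.sqrt ((zp - zm * t) * (zm - zm * t))))
      = (Real.sqrt zp)⁻¹ * (1 / (Real.sqrt t * Real.sqrt (1 - t) *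
          Real.sqrt (1 - zm / zp * t) * (1 - zm * t))) := by
  have hzp : 0 < zp := h0.trans h2
  have hxt : 0 ≤ 1 - zm / zp * t := by
    have : zm / zp * t ≤ 1 := by
      nlinarith [(div_lt_one hzp).2 h2, div_pos h0 hzp, ht.1, ht.2]
    linarith
  have hfactor : (zp - zm * t) * (zm - zm * t) = zp * (1 - zm / zp * t) * (zm * (1 - t)) := by
    field_simp
  rw [hfactor, Real.sqrt_mul (mul_nonneg hzp.le hxt), Real.sqrt_mul hzp.le, Real.sqrt_mul h0.le,
    Real.sqrt_mul h0.le]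
  have : 0 < Real.sqrt t := Real.sqrt_pos.2 ht.1
  have : 0 < Real.sqrt zm := Real.sqrt_pos.2 h0
  field_simp
  rw [Real.sq_sqrt h0.le]

/-- for `0 < z₋ < 1` and `z₋ < z₊`,
`∫₀^{z₋} dz/((1−z)√z √((z₊−z)(z₋−z))) = π·z₊^{−1/2}·F₁(1/2,1/2,1;1;z₋/z₊,z₋)`
(`zm` stands for `z₋`, `zp` for `z₊`). -/
theorem stmt_8 (zm zp : ℝ) (h0 : 0 < zm) (h1 : zm < 1) (h2 : zm < zp) :
    ∫ z in (0 : ℝ)..zm,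
        1 / ((1 - z) * Real.sqrt z * Real.sqrt ((zp - z) * (zm - z)))
      = Real.pi * zp ^ (-(1 : ℝ) / 2) *
          appellF1 (1 / 2) (1 / 2) 1 1 (zm / zp) zm := by
  have hzp : 0 < zp := h0.trans h2
  have hx : |zm / zp| < 1 := by
    rw [abs_of_pos (div_pos h0 hzp)]; exact (div_lt_one hzp).2 h2
  have hy : |zm| < 1 := by rwa [abs_of_pos h0]
  have hsubst := intervalIntegral.smul_integral_comp_mul_left (a := 0) (b := 1)
    (fun z => 1 / ((1 - z) * Real.sqrt z * Real.sqrt ((zp - z) * (zm - z)))) zm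
  rw [mul_zero, mul_one] at hsubst
  rw [← hsubst, smul_eq_mul,
    ← intervalIntegral.integral_const_mul, intervalIntegral.integral_of_le zero_le_one,
    integral_Ioc_eq_integral_Ioo, setIntegral_congr_fun measurableSet_Ioo
      fun t ht => integrand_comp_mul_left_eq h0 h2 ht,
    integral_const_mul, integral_one_div_sqrt_mul_sqrt_mul_sqrt_mul_eq_tsum hx hy,
    appellF1_half_half_one_one, neg_div, Real.rpow_neg hzp.le, ← Real.sqrt_eq_rpow]
  ring
end
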